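/- arXiv:1607.06887 — 2 statements merged into one kernel-verified Lean document; each statement's English description precedes it below -/
import Mathlib

section
/- For a real ν > 0 and natural number n with n < ν, ∫_{-∞}^0 x^n (1 + x²/ν)^{-(ν+1)/2} dx = (-1)^n · (ν^{(n+1)/2}/2) · B((ν-n)/2, (1+n)/2), where B is the Beta function. -/
open MeasureTheory Real Set ProbabilityTheory

/-!
Reflecting `x ↦ -x` produces the sign `(-1)^n`, the scaling `x = √ν y` the factor
`ν^{(n+1)/2}`, and the substitution `u = y²` (with its factor `1/2`) turns the integral into
`∫_0^∞ u^{a-1} (1+u)^{-(a+b)} du` with `a = (n+1)/2`, `b = (ν-n)/2`. The substitution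
`t = u/(1+u)` identifies this with the Beta integral `∫_0^1 t^{a-1} (1-t)^{b-1} dt = B(a,b)`.
-/

theorem integral_Ioo_rpow_mul_one_sub_rpow {a b : ℝ} (ha : 0 < a) (hb : 0 < b) :
    ∫ x in Ioo (0 : ℝ) 1, x ^ (a - 1) * (1 - x) ^ (b - 1) = beta a b := by
  have hcomplex : ∀ x ∈ Ioc (0 : ℝ) 1,
      (x : ℂ) ^ ((a : ℂ) - 1) * (1 - (x : ℂ)) ^ ((b : ℂ) - 1) =
        ((x ^ (a - 1) * (1 - x) ^ (b - 1) : ℝ) : ℂ) := by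
    rintro x ⟨hx0, hx1⟩
    rw [Complex.ofReal_mul, Complex.ofReal_cpow hx0.le, Complex.ofReal_cpow (sub_nonneg.2 hx1)]
    norm_cast
  rw [beta_eq_betaIntegralReal a b ha hb, Complex.betaIntegral,
    intervalIntegral.integral_of_le zero_le_one, setIntegral_congr_fun measurableSet_Ioc hcomplex,
    integral_complex_ofReal, Complex.ofReal_re, integral_Ioc_eq_integral_Ioo]

theorem image_div_one_add_Ioi : (fun u : ℝ ↦ u / (1 + u)) '' Ioi 0 = Ioo 0 1 := by
  ext x
  constructor
  · rintro ⟨u, hu : 0 < u, rfl⟩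
    exact ⟨by positivity, (div_lt_one (by positivity)).2 (by linarith)⟩
  · rintro ⟨hx0, hx1⟩
    have h : 0 < 1 - x := sub_pos.2 hx1
    refine ⟨x / (1 - x), div_pos hx0 h, ?_⟩
    field_simp
    ring

theorem injOn_div_one_add_Ioi : InjOn (fun u : ℝ ↦ u / (1 + u)) (Ioi 0) := by
  intro u (hu : 0 < u) v (hv : 0 < v) huv
  rw [div_eq_div_iff (by positivity) (by positivity)] at huv
  linarith

theorem integral_Ioi_rpow_mul_one_add_rpow_neg {a b : ℝ} (ha : 0 < a) (hb : 0 < b) :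
    ∫ u in Ioi (0 : ℝ), u ^ (a - 1) * (1 + u) ^ (-(a + b)) = beta a b := by
  have hderiv : ∀ u ∈ Ioi (0 : ℝ),
      HasDerivWithinAt (fun u ↦ u / (1 + u)) ((1 + u) ^ (-2 : ℝ)) (Ioi 0) u := by
    intro u (hu : 0 < u)
    have h : HasDerivAt (fun u : ℝ ↦ u / (1 + u)) ((1 * (1 + u) - u * 1) / (1 + u) ^ 2) u :=
      (hasDerivAt_id' u).div ((hasDerivAt_id' u).const_add 1) (by positivity)
    refine h.hasDerivWithinAt.congr_deriv ?_
    rw [rpow_neg (by positivity), rpow_two]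
    ring
  rw [← integral_Ioo_rpow_mul_one_sub_rpow ha hb, ← image_div_one_add_Ioi,
    integral_image_eq_integral_abs_deriv_smul measurableSet_Ioi hderiv injOn_div_one_add_Ioi]
  refine setIntegral_congr_fun measurableSet_Ioi fun u (hu : 0 < u) ↦ ?_
  have h1u : 0 < 1 + u := by positivity
  have hcompl : 1 - u / (1 + u) = (1 + u)⁻¹ := by field_simp; ring
  rw [hcompl, div_rpow hu.le h1u.le, inv_rpow h1u.le, abs_of_pos (by positivity), smul_eq_mul,
    div_eq_mul_inv, ← rpow_neg h1u.le, ← rpow_neg h1u.le]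
  calc u ^ (a - 1) * (1 + u) ^ (-(a + b))
      = u ^ (a - 1) * ((1 + u) ^ (-2 : ℝ) * (1 + u) ^ (-(a - 1)) * (1 + u) ^ (-(b - 1))) := by
        rw [← rpow_add h1u, ← rpow_add h1u]
        ring_nf
    _ = _ := by ring

theorem integral_Iic_zero_pow_mul_comp_sq (n : ℕ) (f : ℝ → ℝ) :
    ∫ x in Iic (0 : ℝ), x ^ n * f (x ^ 2) =
      (-1) ^ n * ∫ x in Ioi (0 : ℝ), x ^ n * f (x ^ 2) := by
  have hreflect := integral_comp_neg_Iic 0 fun x ↦ (-1) ^ n * (x ^ n * f (x ^ 2))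
  rw [neg_zero] at hreflect
  rw [← integral_const_mul, ← hreflect]
  congr 1 with x
  rw [neg_sq, ← mul_assoc, ← mul_pow, neg_one_mul, neg_neg]

theorem integral_Ioi_zero_pow_mul_comp_sq_div {c : ℝ} (hc : 0 < c) (n : ℕ) (f : ℝ → ℝ) :
    ∫ x in Ioi (0 : ℝ), x ^ n * f (x ^ 2 / c) =
      c ^ (((n : ℝ) + 1) / 2) * ∫ x in Ioi (0 : ℝ), x ^ n * f (x ^ 2) := by
  have hs : 0 < √c := sqrt_pos.2 hc
  have hscale := integral_comp_mul_left_Ioi (fun x ↦ x ^ n * f (x ^ 2 / c)) 0 hs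
  have hcomp : ∀ x, (√c * x) ^ n * f ((√c * x) ^ 2 / c) = √c ^ n * (x ^ n * f (x ^ 2)) := by
    intro x
    rw [mul_pow, mul_pow, sq_sqrt hc.le, mul_div_cancel_left₀ _ hc.ne', mul_assoc]
  have hpow : c ^ (((n : ℝ) + 1) / 2) = √c ^ (n + 1) := by
    rw [sqrt_eq_rpow, ← rpow_natCast, ← rpow_mul hc.le]
    push_cast
    ring_nf
  simp only [hcomp, integral_const_mul, mul_zero, smul_eq_mul] at hscale
  rw [hpow, pow_succ, mul_comm _ √c, mul_assoc, hscale, mul_inv_cancel_left₀ hs.ne']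

theorem integral_Ioi_zero_pow_mul_comp_sq (n : ℕ) (f : ℝ → ℝ) :
    ∫ x in Ioi (0 : ℝ), x ^ n * f (x ^ 2) =
      (1 / 2) * ∫ u in Ioi (0 : ℝ), u ^ (((n : ℝ) + 1) / 2 - 1) * f u := by
  rw [← integral_comp_rpow_Ioi_of_pos (g := fun u ↦ u ^ (((n : ℝ) + 1) / 2 - 1) * f u)
    zero_lt_two, ← integral_const_mul]
  refine setIntegral_congr_fun measurableSet_Ioi fun x (hx : 0 < x) ↦ ?_
  have hsq : x ^ (2 : ℝ) = x ^ 2 := rpow_two x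
  have hpow : (x ^ 2) ^ (((n : ℝ) + 1) / 2 - 1) * x = x ^ n := by
    rw [← hsq, ← rpow_mul hx.le, ← rpow_add_one hx.ne', ← rpow_natCast]
    ring_nf
  rw [hsq, smul_eq_mul, ← hpow, show (2 : ℝ) - 1 = 1 by norm_num, rpow_one]
  ring

theorem integral_pow_student_neg_general (ν : ℝ) (n : ℕ) (hn : (n : ℝ) < ν) :
    (∫ x in Set.Iic (0 : ℝ), x ^ n * (1 + x ^ 2 / ν) ^ (-(ν + 1) / 2)) =
      (-1 : ℝ) ^ n * (ν ^ (((n : ℝ) + 1) / 2) / 2) *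
        (Real.Gamma ((ν - n) / 2) * Real.Gamma ((1 + n) / 2) /
          Real.Gamma ((ν - n) / 2 + (1 + n) / 2)) := by
  have hν : 0 < ν := (Nat.cast_nonneg n).trans_lt hn
  set e := -(ν + 1) / 2
  have ha : 0 < ((n : ℝ) + 1) / 2 := by positivity
  have hb : 0 < (ν - n) / 2 := by linarith
  have he : e = -(((n : ℝ) + 1) / 2 + (ν - n) / 2) := by ring
  calc ∫ x in Iic 0, x ^ n * (1 + x ^ 2 / ν) ^ e
      = (-1) ^ n * ∫ x in Ioi 0, x ^ n * (1 + x ^ 2 / ν) ^ e :=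
        integral_Iic_zero_pow_mul_comp_sq n fun t ↦ (1 + t / ν) ^ e
    _ = (-1) ^ n * (ν ^ (((n : ℝ) + 1) / 2) * ∫ x in Ioi 0, x ^ n * (1 + x ^ 2) ^ e) := by
        rw [integral_Ioi_zero_pow_mul_comp_sq_div hν n fun t ↦ (1 + t) ^ e]
    _ = (-1) ^ n * (ν ^ (((n : ℝ) + 1) / 2) *
          (1 / 2 * ∫ u in Ioi 0, u ^ (((n : ℝ) + 1) / 2 - 1) * (1 + u) ^ e)) := by
        rw [integral_Ioi_zero_pow_mul_comp_sq n fun t ↦ (1 + t) ^ e]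
    _ = (-1) ^ n *
          (ν ^ (((n : ℝ) + 1) / 2) * (1 / 2 * beta (((n : ℝ) + 1) / 2) ((ν - n) / 2))) := by
        rw [he, integral_Ioi_rpow_mul_one_add_rpow_neg ha hb]
    _ = _ := by
        rw [beta, add_comm ((ν - n) / 2), add_comm (1 : ℝ)]
        ring

/-- For real `ν > 0` and a natural number `n < ν`,
`∫_{-∞}^0 x^n (1 + x²/ν)^{-(ν+1)/2} dx = (-1)^n (ν^{(n+1)/2}/2) B((ν-n)/2, (1+n)/2)`,
where `B(a,b) = Γ(a)Γ(b)/Γ(a+b)` is the Euler Beta function. -/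
theorem integral_pow_student_neg (ν : ℝ) (hν : 0 < ν) (n : ℕ) (hn : (n : ℝ) < ν) :
    (∫ x in Set.Iic (0 : ℝ), x ^ n * (1 + x ^ 2 / ν) ^ (-(ν + 1) / 2)) =
      (-1 : ℝ) ^ n * (ν ^ (((n : ℝ) + 1) / 2) / 2) *
        (Real.Gamma ((ν - n) / 2) * Real.Gamma ((1 + n) / 2) /
          Real.Gamma ((ν - n) / 2 + (1 + n) / 2)) :=
  integral_pow_student_neg_general ν n hn
end

section
/- For t > 0, P > 0, α > 2, and 0 < a < b, ∫_a^b (e^{-tPr^{-α}} - 1)·r dr = ((tP)^{2/α}/α)·[Γ(-2/α, tPb^{-α}) - Γ(-2/α, tPa^{-α})] - (b² - a²)/2, where Γ(s, z) = ∫_z^∞ x^{s-1}e^{-x} dx is the upper incomplete Gamma function. -/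
open MeasureTheory

/-- The upper incomplete Gamma function `Γ(s, z) = ∫_z^∞ x^{s-1} e^{-x} dx`. -/
noncomputable def upperGamma (s z : ℝ) : ℝ :=
  ∫ x in Set.Ioi z, x ^ (s - 1) * Real.exp (-x)

/-! Substituting `x = c r^{-α}` turns `r dr` into `-(c^{2/α}/α) x^{-2/α-1} dx`, so
`∫_a^b e^{-c r^{-α}} r dr` is a difference of two values of `Γ(-2/α, ·)`; the `-1` in the
integrand contributes `-(b² - a²)/2`. -/

open Set intervalIntegral

theorem integrableOn_upperGamma_integrand (s : ℝ) {z : ℝ} (hz : 0 < z) :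
    IntegrableOn (fun x : ℝ => x ^ (s - 1) * Real.exp (-x)) (Ioi z) := by
  refine integrable_of_isBigO_exp_neg one_half_pos ?_ ?_
  · exact (continuousOn_id.rpow_const fun x hx => Or.inl (hz.trans_le hx).ne').mul
      continuousOn_id.neg.rexp
  · simpa only [mul_comm] using (Real.Gamma_integrand_isLittleO (s - 1)).isBigO

theorem upperGamma_sub_upperGamma (s : ℝ) {z₁ z₂ : ℝ} (h₁ : 0 < z₁) (h₂ : 0 < z₂) :
    upperGamma s z₁ - upperGamma s z₂ = ∫ x in z₁..z₂, x ^ (s - 1) * Real.exp (-x) :=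
  integral_Ioi_sub_Ioi' (integrableOn_upperGamma_integrand s h₁)
    (integrableOn_upperGamma_integrand s h₂)

theorem integral_comp_mul_rpow_neg_mul_self {g : ℝ → ℝ} (hg : ContinuousOn g (Ioi 0))
    {c α a b : ℝ} (hc : 0 < c) (hα : α ≠ 0) (ha : 0 < a) (hb : 0 < b) :
    ∫ r in a..b, g (c * r ^ (-α)) * r =
      c ^ (2 / α) / α * ∫ x in c * b ^ (-α)..c * a ^ (-α), x ^ (-(2 / α) - 1) * g x := by
  set f : ℝ → ℝ := fun r => c * r ^ (-α)
  set G : ℝ → ℝ := fun x => x ^ (-(2 / α) - 1) * g x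
  have hpos : ∀ r ∈ uIcc a b, 0 < r := fun r hr => (lt_min ha hb).trans_le hr.1
  have hf : ∀ r ∈ uIcc a b, HasDerivAt f (c * (-α * r ^ (-α - 1))) r := fun r hr =>
    (Real.hasDerivAt_rpow_const (Or.inl (hpos r hr).ne')).const_mul c
  have hf' : ContinuousOn (fun r => c * (-α * r ^ (-α - 1))) (uIcc a b) :=
    continuousOn_const.mul <| continuousOn_const.mul <|
      continuousOn_id.rpow_const fun r hr => Or.inl (hpos r hr).ne'
  have hG : ContinuousOn G (f '' uIcc a b) := by
    refine ((continuousOn_id.rpow_const fun x hx => Or.inl (ne_of_gt hx)).mul hg).mono ?_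
    rintro _ ⟨r, hr, rfl⟩
    exact mul_pos hc (Real.rpow_pos_of_pos (hpos r hr) _)
  have jacobian : ∀ r ∈ uIcc a b,
      (c * (-α * r ^ (-α - 1))) • (G ∘ f) r = -α * c ^ (-(2 / α)) * (g (f r) * r) := by
    intro r hr
    have hr := hpos r hr
    have hc_pow : c * c ^ (-(2 / α) - 1) = c ^ (-(2 / α)) := by
      rw [Real.rpow_sub_one hc.ne']
      field_simp
    have hr_pow : r ^ (-α - 1) * r ^ (-α * (-(2 / α) - 1)) = r := by
      rw [← Real.rpow_add hr, show -α - 1 + -α * (-(2 / α) - 1) = 1 by field_simp; ring,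
        Real.rpow_one]
    simp only [f, G, Function.comp, smul_eq_mul]
    rw [Real.mul_rpow hc.le (Real.rpow_pos_of_pos hr _).le, ← Real.rpow_mul hr.le]
    calc _ = -α * (c * c ^ (-(2 / α) - 1)) * (r ^ (-α - 1) * r ^ (-α * (-(2 / α) - 1)))
          * g (c * r ^ (-α)) := by ring
      _ = _ := by rw [hc_pow, hr_pow]; ring
  have hsubst := integral_deriv_smul_comp' hf hf' hG
  rw [integral_congr jacobian, intervalIntegral.integral_const_mul, integral_symm (f b),
    Real.rpow_neg hc.le] at hsubst
  field_simp at hsubst ⊢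
  linarith

theorem integral_exp_neg_mul_rpow_neg_mul_self {c α a b : ℝ} (hc : 0 < c) (hα : α ≠ 0)
    (ha : 0 < a) (hb : 0 < b) :
    ∫ r in a..b, Real.exp (-(c * r ^ (-α))) * r =
      c ^ (2 / α) / α *
        (upperGamma (-(2 / α)) (c * b ^ (-α)) - upperGamma (-(2 / α)) (c * a ^ (-α))) := by
  rw [upperGamma_sub_upperGamma _ (by positivity) (by positivity)]
  exact integral_comp_mul_rpow_neg_mul_self (g := fun x => Real.exp (-x))
    continuous_neg.rexp.continuousOn hc hα ha hb

/-- For `t > 0`, `P > 0`, `α > 2` and `0 < a < b`: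
`∫_a^b (e^{-tPr^{-α}} - 1) r dr
  = ((tP)^{2/α}/α)[Γ(-2/α, tPb^{-α}) - Γ(-2/α, tPa^{-α})] - (b²-a²)/2`. -/
theorem cgf_integral_incomplete_gamma (t P α a b : ℝ) (ht : 0 < t)
    (hP : 0 < P) (hα : 2 < α) (ha : 0 < a) (hab : a < b) :
    (∫ r in a..b, (Real.exp (-(t * P * r ^ (-α))) - 1) * r) =
      ((t * P) ^ (2 / α) / α) *
          (upperGamma (-(2 / α)) (t * P * b ^ (-α)) -
            upperGamma (-(2 / α)) (t * P * a ^ (-α))) -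
        (b ^ 2 - a ^ 2) / 2 := by
  have hb : 0 < b := ha.trans hab
  have hcont : ContinuousOn (fun r => Real.exp (-(t * P * r ^ (-α))) * r) (uIcc a b) := by
    refine ContinuousOn.mul ?_ continuousOn_id
    exact (continuousOn_const.mul (continuousOn_id.rpow_const fun r hr =>
      Or.inl ((lt_min ha hb).trans_le hr.1).ne')).neg.rexp
  simp_rw [sub_mul, one_mul]
  rw [integral_sub hcont.intervalIntegrable intervalIntegrable_id, integral_id,
    integral_exp_neg_mul_rpow_neg_mul_self (mul_pos ht hP) (zero_lt_two.trans hα).ne' ha hb]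
end
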